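/- Suppose (q, r) solves the ∂NLS system and ψ̃₁ satisfies ∂ψ̃₁/∂t₁ = -2q + 4qr ψ̃₁ and ∂ψ̃₁/∂t₂ = -q_x + 2(q_x r - q r_x - 2q²r²) ψ̃₁. Then (q, r - 1/ψ̃₁) also solves the ∂NLS system q_t = (1/2)q_xx - 2q²r_x - 4q³r², r_t = -(1/2)r_xx - 2r²q_x + 4r³q² (where ψ̃₁ is nonvanishing). -/

import Mathlib

noncomputable def pdx (f : ℝ → ℝ → ℂ) (x t : ℝ) : ℂ := deriv (fun u => f u t) x
noncomputable def pdt (f : ℝ → ℝ → ℂ) (x t : ℝ) : ℂ := deriv (fun u => f x u) t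

def SolvesDNLS (q r : ℝ → ℝ → ℂ) : Prop :=
  ∀ x t : ℝ,
    pdt q x t = (1/2) * pdx (fun a b => pdx q a b) x t
      - 2 * (q x t)^2 * pdx r x t - 4 * (q x t)^3 * (r x t)^2
    ∧ pdt r x t = -(1/2) * pdx (fun a b => pdx r a b) x t
      - 2 * (r x t)^2 * pdx q x t + 4 * (r x t)^3 * (q x t)^2

private lemma pdx_eq_fderiv {f : ℝ → ℝ → ℂ}
    (hf : ContDiff ℝ (⊤ : ℕ∞) fun p : ℝ × ℝ => f p.1 p.2) (x t : ℝ) :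
    pdx f x t = fderiv ℝ (fun p : ℝ × ℝ => f p.1 p.2) (x, t) (1, 0) := by
  have hd : DifferentiableAt ℝ (fun p : ℝ × ℝ => f p.1 p.2) (x, t) :=
    (hf.differentiable (by simp)).differentiableAt
  have h2 : HasDerivAt (fun u : ℝ => ((u, t) : ℝ × ℝ)) (1, 0) x :=
    HasDerivAt.prodMk (hasDerivAt_id x) (hasDerivAt_const x t)
  exact (hd.hasFDerivAt.comp_hasDerivAt x h2).deriv

private lemma hasDerivAt_pdx {f : ℝ → ℝ → ℂ}
    (hf : ContDiff ℝ (⊤ : ℕ∞) fun p : ℝ × ℝ => f p.1 p.2) (x t : ℝ) :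
    HasDerivAt (fun u => f u t) (pdx f x t) x := by
  have hd : DifferentiableAt ℝ (fun p : ℝ × ℝ => f p.1 p.2) (x, t) :=
    (hf.differentiable (by simp)).differentiableAt
  have h2 : HasDerivAt (fun u : ℝ => ((u, t) : ℝ × ℝ)) (1, 0) x :=
    HasDerivAt.prodMk (hasDerivAt_id x) (hasDerivAt_const x t)
  rw [pdx_eq_fderiv hf]
  exact hd.hasFDerivAt.comp_hasDerivAt x h2

private lemma hasDerivAt_pdt {f : ℝ → ℝ → ℂ}
    (hf : ContDiff ℝ (⊤ : ℕ∞) fun p : ℝ × ℝ => f p.1 p.2) (x t : ℝ) :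
    HasDerivAt (fun u => f x u) (pdt f x t) t := by
  have hd : DifferentiableAt ℝ (fun p : ℝ × ℝ => f p.1 p.2) (x, t) :=
    (hf.differentiable (by simp)).differentiableAt
  have h2 : HasDerivAt (fun u : ℝ => ((x, u) : ℝ × ℝ)) (0, 1) t :=
    HasDerivAt.prodMk (hasDerivAt_const t x) (hasDerivAt_id t)
  have h3 := hd.hasFDerivAt.comp_hasDerivAt t h2
  have h4 : pdt f x t = fderiv ℝ (fun p : ℝ × ℝ => f p.1 p.2) (x, t) (0, 1) := h3.deriv
  rw [h4]; exact h3

private lemma contDiff_pdx {f : ℝ → ℝ → ℂ}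
    (hf : ContDiff ℝ (⊤ : ℕ∞) fun p : ℝ × ℝ => f p.1 p.2) :
    ContDiff ℝ (⊤ : ℕ∞) fun p : ℝ × ℝ => pdx f p.1 p.2 := by
  have h : (fun p : ℝ × ℝ => pdx f p.1 p.2)
      = fun p : ℝ × ℝ => fderiv ℝ (fun p : ℝ × ℝ => f p.1 p.2) p (1, 0) := by
    funext p
    rw [show p = (p.1, p.2) from rfl, ← pdx_eq_fderiv hf]
  rw [h]
  exact (hf.fderiv_right (by simp)).clm_apply contDiff_const

/-- Right Bäcklund transformation `s₁ᴿ`: if `(q,r)` solves ∂NLS and `ψ̃₁`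
satisfies the stated linear system, then `(q, r - 1/ψ̃₁)` also solves ∂NLS. -/
theorem right_Weyl_action_preserves_dNLS (q r ψ : ℝ → ℝ → ℂ)
    (hq : ContDiff ℝ (⊤ : ℕ∞) fun p : ℝ × ℝ => q p.1 p.2)
    (hr : ContDiff ℝ (⊤ : ℕ∞) fun p : ℝ × ℝ => r p.1 p.2)
    (hψ : ContDiff ℝ (⊤ : ℕ∞) fun p : ℝ × ℝ => ψ p.1 p.2)
    (hsol : SolvesDNLS q r)
    (hψx : ∀ x t, pdx ψ x t = -2 * q x t + 4 * q x t * r x t * ψ x t)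
    (hψt : ∀ x t, pdt ψ x t = -pdx q x t
        + 2 * (pdx q x t * r x t - q x t * pdx r x t
            - 2 * (q x t)^2 * (r x t)^2) * ψ x t)
    (hψne : ∀ x t, ψ x t ≠ 0) :
    SolvesDNLS q (fun x t => r x t - (ψ x t)⁻¹) := by
  have e1 : ∀ X T : ℝ, pdx (fun x t => r x t - (ψ x t)⁻¹) X T
      = pdx r X T + pdx ψ X T / (ψ X T) ^ 2 := by
    intro X T
    have h := (hasDerivAt_pdx hr X T).sub
      ((hasDerivAt_const X (1:ℂ)).div (hasDerivAt_pdx hψ X T) (hψne X T))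
    have hfun : (fun u => r u T - (ψ u T)⁻¹) = fun u => r u T - 1 / ψ u T := by
      funext u; rw [one_div]
    have h2 : pdx (fun x t => r x t - (ψ x t)⁻¹) X T
        = pdx r X T - (0 * ψ X T - 1 * pdx ψ X T) / ψ X T ^ 2 := by
      show deriv (fun u => r u T - (ψ u T)⁻¹) X = _
      rw [hfun]; exact h.deriv
    rw [h2]; ring
  intro x t
  have e1t : pdt (fun x t => r x t - (ψ x t)⁻¹) x t
      = pdt r x t + pdt ψ x t / (ψ x t) ^ 2 := by
    have h := (hasDerivAt_pdt hr x t).sub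
      ((hasDerivAt_const t (1:ℂ)).div (hasDerivAt_pdt hψ x t) (hψne x t))
    have hfun : (fun u => r x u - (ψ x u)⁻¹) = fun u => r x u - 1 / ψ x u := by
      funext u; rw [one_div]
    have h2 : pdt (fun x t => r x t - (ψ x t)⁻¹) x t
        = pdt r x t - (0 * ψ x t - 1 * pdt ψ x t) / ψ x t ^ 2 := by
      show deriv (fun u => r x u - (ψ x u)⁻¹) t = _
      rw [hfun]; exact h.deriv
    rw [h2]; ring
  have e2 : pdx (fun a b => pdx (fun x t => r x t - (ψ x t)⁻¹) a b) x t
      = pdx (fun a b => pdx r a b) x t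
        + (((-2 * pdx q x t
            + 4 * ((pdx q x t * r x t + q x t * pdx r x t) * ψ x t
                + q x t * r x t * pdx ψ x t)) * (ψ x t * ψ x t)
          - (-2 * q x t + 4 * (q x t * r x t * ψ x t))
              * (pdx ψ x t * ψ x t + ψ x t * pdx ψ x t)) / (ψ x t * ψ x t) ^ 2) := by
    have hQ := hasDerivAt_pdx hq x t
    have hR := hasDerivAt_pdx hr x t
    have hP := hasDerivAt_pdx hψ x t
    have hRxx := hasDerivAt_pdx (contDiff_pdx hr) x t
    have hg := hRxx.add ((((hQ.const_mul (-2:ℂ)).add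
      (((hQ.mul hR).mul hP).const_mul (4:ℂ)))).div (hP.mul hP)
      (mul_ne_zero (hψne x t) (hψne x t)))
    have hfun : (fun u => pdx (fun x t => r x t - (ψ x t)⁻¹) u t)
        = fun u => pdx r u t
            + (-2 * q u t + 4 * (q u t * r u t * ψ u t)) / (ψ u t * ψ u t) := by
      funext u
      rw [e1 u t, hψx u t]
      have hpp : (ψ u t) ^ 2 = ψ u t * ψ u t := sq (ψ u t) ▸ rfl
      rw [hpp]; ring
    show deriv (fun u => pdx (fun x t => r x t - (ψ x t)⁻¹) u t) x = _
    rw [hfun]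
    exact hg.deriv
  refine ⟨?_, ?_⟩
  · have h1 := (hsol x t).1
    rw [h1, e1 x t, hψx x t]
    have hP := hψne x t
    field_simp
    ring
  · have h2 := (hsol x t).2
    rw [e1t, e2, h2, hψt x t, hψx x t]
    have hP := hψne x t
    field_simp [hP]
    have hc : (ψ x t)⁻¹ ^ 9 * ψ x t ^ 9 = 1 := by
      rw [inv_pow]; exact inv_mul_cancel₀ (pow_ne_zero 9 hP)
    ring
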